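/- arXiv:0812.1012 — 6 statements merged into one kernel-verified Lean document; each statement's English description precedes it below -/
import Mathlib

section
/- For nonnegative reals $w_1,\dots,w_n$ (weights) and $\alpha_1,\dots,\alpha_n$ (ratios), and any partition of $\{1,\dots,n\}$ into disjoint sets $A$ and $B$: $\sum_{i,j\in A, j\ge i} w_i w_j \min(\alpha_i,\alpha_j) + \sum_{i,j\in B, j\ge i} w_i w_j \min(\alpha_i,\alpha_j) \ge \sum_{i\in A, j\in B} w_i w_j \min(\alpha_i,\alpha_j)$. -/
/-!
The kernel `min (α i) (α j)` is positive semidefinite for `α ≥ 0`. Applying this to the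
vector equal to `w` on `A` and to `-w` on `B` gives `2 ∑_{A×B} ≤ ∑_{A×A} + ∑_{B×B}`, and each
full square sum is at most twice the corresponding sum over pairs `i ≤ j`, since the two
differ by the diagonal, which is nonnegative.
-/

open Finset

variable {ι R : Type*}

section TriangularSum

variable {M : Type*} [AddCommMonoid M] [LinearOrder ι]

theorem sum_sum_filter_le_add_self (s : Finset ι) (f : ι → ι → M)
    (hf : ∀ i j, f i j = f j i) :
    (∑ i ∈ s, ∑ j ∈ s with i ≤ j, f i j) + ∑ i ∈ s, ∑ j ∈ s with i ≤ j, f i j =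
      ∑ i ∈ s, ∑ j ∈ s, f i j + ∑ i ∈ s, f i i := by
  have hswap : ∑ i ∈ s, ∑ j ∈ s with i ≤ j, f i j = ∑ i ∈ s, ∑ j ∈ s with j ≤ i, f i j := by
    simp only [sum_filter]
    rw [sum_comm]
    simp only [hf]
  have hsplit : ∀ i j, ((if i ≤ j then f i j else 0) + if j ≤ i then f i j else 0) =
      f i j + if i = j then f i j else 0 := by
    intro i j
    rcases lt_trichotomy i j with h | rfl | h
    · simp [h.le, h.not_ge, h.ne]
    · simp
    · simp [h.le, h.not_ge, h.ne']
  nth_rewrite 2 [hswap]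
  simp only [sum_filter, ← sum_add_distrib, hsplit]
  exact sum_congr rfl fun i hi => by rw [sum_add_distrib, sum_ite_eq, if_pos hi]

end TriangularSum

section MinKernel

variable [CommRing R] [LinearOrder R] [IsStrictOrderedRing R]

/-- Adding an element `a` of minimal `α` to `s` adds `α a * (v a ^ 2 + 2 * v a * ∑ v)` to the
double sum, so the induction hypothesis at `c = α a` completes the square
`α a * (v a + ∑ v) ^ 2`. -/
theorem mul_sq_sum_le_sum_sum_mul_min (s : Finset ι) (α v : ι → R) (c : R)
    (hc : ∀ i ∈ s, c ≤ α i) (hc₀ : 0 ≤ c) :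
    c * (∑ i ∈ s, v i) ^ 2 ≤ ∑ i ∈ s, ∑ j ∈ s, v i * v j * min (α i) (α j) := by
  classical
  induction s using Finset.induction_on_min_value α generalizing c with
  | empty => simp
  | insert a s ha hmin ih =>
    have hsum : ∑ i ∈ insert a s, ∑ j ∈ insert a s, v i * v j * min (α i) (α j) =
        v a * v a * α a + 2 * v a * α a * ∑ j ∈ s, v j +
          ∑ i ∈ s, ∑ j ∈ s, v i * v j * min (α i) (α j) := by
      have hrow : ∑ j ∈ s, v a * v j * min (α a) (α j) = v a * α a * ∑ j ∈ s, v j := by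
        rw [mul_sum]
        exact sum_congr rfl fun j hj => by rw [min_eq_left (hmin j hj)]; ring
      have hcol : ∑ i ∈ s, v i * v a * min (α i) (α a) = v a * α a * ∑ i ∈ s, v i := by
        rw [mul_sum]
        exact sum_congr rfl fun i hi => by rw [min_eq_right (hmin i hi)]; ring
      simp only [sum_insert ha, min_self, sum_add_distrib, hrow, hcol]
      ring
    have hca : c ≤ α a := hc a (mem_insert_self a s)
    have hrest := ih (α a) hmin (hc₀.trans hca)
    rw [hsum, sum_insert ha]
    nlinarith [mul_le_mul_of_nonneg_right hca (sq_nonneg (v a + ∑ i ∈ s, v i))]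

theorem sum_sum_mul_mul_min_nonneg (s : Finset ι) (α v : ι → R) (hα : ∀ i ∈ s, 0 ≤ α i) :
    0 ≤ ∑ i ∈ s, ∑ j ∈ s, v i * v j * min (α i) (α j) := by
  simpa using mul_sq_sum_le_sum_sum_mul_min s α v 0 hα le_rfl

theorem two_mul_sum_sum_mul_min_le (A B : Finset ι) (α w : ι → R) (hα : ∀ i, 0 ≤ α i) :
    2 * ∑ i ∈ A, ∑ j ∈ B, w i * w j * min (α i) (α j) ≤
      ∑ i ∈ A, ∑ j ∈ A, w i * w j * min (α i) (α j) +
        ∑ i ∈ B, ∑ j ∈ B, w i * w j * min (α i) (α j) := by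
  have hpsd := sum_sum_mul_mul_min_nonneg (A.disjSum B) (Sum.elim α α) (Sum.elim w (-w))
    (by simp [hα])
  have hBA : ∑ i ∈ B, ∑ j ∈ A, w i * w j * min (α i) (α j) =
      ∑ i ∈ A, ∑ j ∈ B, w i * w j * min (α i) (α j) := by
    rw [sum_comm]
    exact sum_congr rfl fun i _ => sum_congr rfl fun j _ => by rw [min_comm]; ring
  simp only [sum_disjSum, Sum.elim_inl, Sum.elim_inr, Pi.neg_apply, mul_neg, neg_mul,
    sum_neg_distrib, sum_add_distrib, hBA, neg_add_rev, neg_neg] at hpsd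
  linarith

end MinKernel

theorem partition_min_inequality_general {n : ℕ} (w α : Fin n → ℝ)
    (hα : ∀ i, 0 ≤ α i)
    (A B : Finset (Fin n)) :
    (∑ i ∈ A, ∑ j ∈ A.filter (fun j => i ≤ j), w i * w j * min (α i) (α j)) +
    (∑ i ∈ B, ∑ j ∈ B.filter (fun j => i ≤ j), w i * w j * min (α i) (α j)) ≥
    ∑ i ∈ A, ∑ j ∈ B, w i * w j * min (α i) (α j) := by
  have hsymm : ∀ i j, w i * w j * min (α i) (α j) = w j * w i * min (α j) (α i) :=
    fun i j => by rw [min_comm]; ring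
  have hdiag : ∀ s : Finset (Fin n), 0 ≤ ∑ i ∈ s, w i * w i * min (α i) (α i) :=
    fun s => sum_nonneg fun i _ => by rw [min_self]; exact mul_nonneg (mul_self_nonneg _) (hα i)
  have hA := sum_sum_filter_le_add_self A _ hsymm
  have hB := sum_sum_filter_le_add_self B _ hsymm
  have hcross := two_mul_sum_sum_mul_min_le A B α w hα
  linarith [hdiag A, hdiag B]

/-- Partition inequality for weighted completion time (Lemma 2 of the paper):
for nonnegative weights `w` and ratios `α`, and a partition of `[n]` into `A`, `B`,
the within-part pair sums dominate the cross-part pair sum. -/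
theorem partition_min_inequality {n : ℕ} (w α : Fin n → ℝ)
    (hw : ∀ i, 0 ≤ w i) (hα : ∀ i, 0 ≤ α i)
    (A B : Finset (Fin n)) (hdisj : Disjoint A B) (hcover : A ∪ B = Finset.univ) :
    (∑ i ∈ A, ∑ j ∈ A.filter (fun j => i ≤ j), w i * w j * min (α i) (α j)) +
    (∑ i ∈ B, ∑ j ∈ B.filter (fun j => i ≤ j), w i * w j * min (α i) (α j)) ≥
    ∑ i ∈ A, ∑ j ∈ B, w i * w j * min (α i) (α j) :=
  partition_min_inequality_general w α hα A B
end

section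
/- Weighted completion time recombinant property: for jobs with weights $w_i>0$ and a partition of $[n]$ into $A$ (with known sizes $v_i\ge 0$) and $\bar A$ (with expected sizes $\mu_j\ge 0$), the optimal weighted completion time over all jobs, $\sum_{i,j\in A, j\ge i}\min(w_j v_i, w_i v_j) + \sum_{i,j\in \bar A, j\ge i}\min(w_j\mu_i, w_i\mu_j) + \sum_{i\in A, j\in \bar A}\min(w_j v_i, w_i\mu_j)$, is at most twice the sum of the optimal completion time on $A$ alone, $\sum_{i,j\in A, j\ge i}\min(w_j v_i, w_i v_j)$, plus the optimal completion time on $\bar A$ alone, $\sum_{i,j\in \bar A, j\ge i}\min(w_j\mu_i, w_i\mu_j)$. -/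
/-!
With `r i = ℓ i / w i`, Smith's pairwise cost `min (w j * ℓ i) (w i * ℓ j)` equals
`w i * w j * min (r i) (r j)`, and the kernel `min (r i) (r j)` is positive semidefinite for
`r ≥ 0`. Testing it against the vector equal to `w` on `A` and to `-w` on `B` bounds twice the
cross term by the full double sums over `A` and over `B`, and each of these is at most twice
the corresponding optimum, an upper-triangle sum of a symmetric kernel with nonnegative diagonal.
-/

open Finset

theorem sum_sum_mul_mul_min_nonneg_s3 {ι : Type*} (S : Finset ι) (r x : ι → ℝ)
    (hr : ∀ i ∈ S, 0 ≤ r i) : 0 ≤ ∑ i ∈ S, ∑ j ∈ S, x i * x j * min (r i) (r j) := by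
  classical
  induction S using Finset.strongInduction generalizing r with
  | _ S ih =>
    rcases S.eq_empty_or_nonempty with rfl | hS
    · simp
    obtain ⟨m, hm, hmin⟩ := S.exists_min_image r hS
    -- Subtracting the smallest value `r m` splits off the rank-one term `r m * (∑ x)²` and
    -- leaves a kernel that vanishes on the row and column of `m`.
    set r' : ι → ℝ := fun i => r i - r m
    have hshift : ∑ i ∈ S, ∑ j ∈ S, x i * x j * min (r i) (r j)
        = ∑ i ∈ S, ∑ j ∈ S, x i * x j * min (r' i) (r' j) + r m * (∑ i ∈ S, x i) ^ 2 := by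
      rw [sq, sum_mul_sum, mul_sum, ← sum_add_distrib]
      refine sum_congr rfl fun i _ => ?_
      rw [mul_sum, ← sum_add_distrib]
      refine sum_congr rfl fun j _ => ?_
      rw [← sub_add_cancel (r i) (r m), ← sub_add_cancel (r j) (r m), min_add_add_right]
      simp only [r']
      ring
    have hr'm : ∀ j ∈ S, min (r' m) (r' j) = 0 := fun j hj =>
      min_eq_left_iff.mpr (by simp only [r', sub_self, sub_nonneg, hmin j hj]) |>.trans (sub_self _)
    have herase : ∑ i ∈ S.erase m, ∑ j ∈ S.erase m, x i * x j * min (r' i) (r' j)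
        = ∑ i ∈ S, ∑ j ∈ S, x i * x j * min (r' i) (r' j) := by
      rw [sum_subset (erase_subset m S) fun i hi hi' => ?_]
      · refine sum_congr rfl fun i hi => sum_subset (erase_subset m S) fun j hj hj' => ?_
        obtain rfl : j = m := by simpa [hj] using hj'
        rw [min_comm, hr'm i hi, mul_zero]
      · obtain rfl : i = m := by simpa [hi] using hi'
        refine sum_eq_zero fun j hj => ?_
        rw [hr'm j (mem_of_mem_erase hj), mul_zero]
    have hrest := ih (S.erase m) (erase_ssubset hm) r' fun i hi =>
      sub_nonneg.mpr (hmin i (mem_of_mem_erase hi))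
    rw [hshift, ← herase]
    exact add_nonneg hrest (mul_nonneg (hr m hm) (sq_nonneg _))

theorem sum_sum_le_two_mul_sum_sum_filter_le {ι : Type*} [LinearOrder ι] (S : Finset ι)
    (f : ι → ι → ℝ) (hsymm : ∀ i j, f i j = f j i) (hdiag : ∀ i, 0 ≤ f i i) :
    ∑ i ∈ S, ∑ j ∈ S, f i j ≤ 2 * ∑ i ∈ S, ∑ j ∈ S with i ≤ j, f i j := by
  have hpoint : ∀ i j, f i j ≤ (if i ≤ j then f i j else 0) + (if j ≤ i then f i j else 0) := by
    intro i j
    rcases lt_trichotomy i j with h | rfl | h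
    · simp [h.le, h.not_ge]
    · simp [hdiag i]
    · simp [h.le, h.not_ge]
  have hlower : ∑ i ∈ S, ∑ j ∈ S, (if j ≤ i then f i j else 0)
      = ∑ i ∈ S, ∑ j ∈ S with i ≤ j, f i j := by
    rw [sum_comm]
    simp only [sum_filter, hsymm _ _]
  calc ∑ i ∈ S, ∑ j ∈ S, f i j
      ≤ ∑ i ∈ S, ∑ j ∈ S, ((if i ≤ j then f i j else 0) + (if j ≤ i then f i j else 0)) :=
        sum_le_sum fun i _ => sum_le_sum fun j _ => hpoint i j
    _ = 2 * ∑ i ∈ S, ∑ j ∈ S with i ≤ j, f i j := by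
        rw [sum_congr rfl fun i _ => sum_add_distrib, sum_add_distrib, hlower]
        simp only [← sum_filter]
        ring

theorem two_mul_sum_sum_mul_mul_min_le {ι : Type*} [DecidableEq ι] (A B : Finset ι)
    (hAB : Disjoint A B) (y rA rB : ι → ℝ) (hrA : ∀ i ∈ A, 0 ≤ rA i) (hrB : ∀ i ∈ B, 0 ≤ rB i) :
    2 * ∑ i ∈ A, ∑ j ∈ B, y i * y j * min (rA i) (rB j) ≤
      ∑ i ∈ A, ∑ j ∈ A, y i * y j * min (rA i) (rA j) +
        ∑ i ∈ B, ∑ j ∈ B, y i * y j * min (rB i) (rB j) := by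
  have hnotA : ∀ j ∈ B, j ∉ A := fun j hj hjA => disjoint_left.mp hAB hjA hj
  set x := A.piecewise y (-y)
  set r := A.piecewise rA rB
  have hpsd := sum_sum_mul_mul_min_nonneg_s3 (A ∪ B) r x fun i hi => by
    rcases mem_union.mp hi with hi | hi
    · simpa [r, hi] using hrA i hi
    · simpa [r, hnotA i hi] using hrB i hi
  simp only [sum_union hAB, sum_add_distrib] at hpsd
  have hAA : ∑ i ∈ A, ∑ j ∈ A, x i * x j * min (r i) (r j) =
        ∑ i ∈ A, ∑ j ∈ A, y i * y j * min (rA i) (rA j) :=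
    sum_congr rfl fun i hi => sum_congr rfl fun j hj => by simp [x, r, hi, hj]
  have hcross : ∑ i ∈ A, ∑ j ∈ B, x i * x j * min (r i) (r j) =
        -∑ i ∈ A, ∑ j ∈ B, y i * y j * min (rA i) (rB j) := by
    simp only [← sum_neg_distrib]
    exact sum_congr rfl fun i hi => sum_congr rfl fun j hj => by simp [x, r, hi, hnotA j hj]
  have hBA : ∑ i ∈ B, ∑ j ∈ A, x i * x j * min (r i) (r j) =
        -∑ i ∈ A, ∑ j ∈ B, y i * y j * min (rA i) (rB j) := by
    rw [sum_comm]
    simp only [← sum_neg_distrib]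
    exact sum_congr rfl fun i hi => sum_congr rfl fun j hj => by
      simp [x, r, hi, hnotA j hj, min_comm, mul_comm]
  have hBB : ∑ i ∈ B, ∑ j ∈ B, x i * x j * min (r i) (r j) =
        ∑ i ∈ B, ∑ j ∈ B, y i * y j * min (rB i) (rB j) :=
    sum_congr rfl fun i hi => sum_congr rfl fun j hj => by simp [x, r, hnotA i hi, hnotA j hj]
  linarith

theorem min_mul_mul_eq_mul_mul_min_div {x y : ℝ} (hx : 0 < x) (hy : 0 < y) (a b : ℝ) :
    min (y * a) (x * b) = x * y * min (a / x) (b / y) := by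
  rw [mul_min_of_nonneg _ _ (mul_pos hx hy).le]
  congr 1 <;> field_simp

theorem completion_time_recombinant_general {n : ℕ} (w v μ : Fin n → ℝ)
    (hw : ∀ i, 0 < w i) (hv : ∀ i, 0 ≤ v i) (hμ : ∀ i, 0 ≤ μ i)
    (A B : Finset (Fin n)) (hdisj : Disjoint A B) :
    (∑ i ∈ A, ∑ j ∈ A.filter (fun j => i ≤ j), min (w j * v i) (w i * v j)) +
    (∑ i ∈ B, ∑ j ∈ B.filter (fun j => i ≤ j), min (w j * μ i) (w i * μ j)) +
    (∑ i ∈ A, ∑ j ∈ B, min (w j * v i) (w i * μ j)) ≤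
    2 * ((∑ i ∈ A, ∑ j ∈ A.filter (fun j => i ≤ j), min (w j * v i) (w i * v j)) +
         (∑ i ∈ B, ∑ j ∈ B.filter (fun j => i ≤ j), min (w j * μ i) (w i * μ j))) := by
  have hratio (a b : Fin n → ℝ) (i j : Fin n) :
      min (w j * a i) (w i * b j) = w i * w j * min (a i / w i) (b j / w j) :=
    min_mul_mul_eq_mul_mul_min_div (hw i) (hw j) _ _
  simp only [hratio]
  have hsymm (a : Fin n → ℝ) (i j : Fin n) :
      w i * w j * min (a i / w i) (a j / w j) = w j * w i * min (a j / w j) (a i / w i) := by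
    rw [mul_comm (w i), min_comm]
  have hdiag (a : Fin n → ℝ) (ha : ∀ i, 0 ≤ a i) (i : Fin n) :
      0 ≤ w i * w i * min (a i / w i) (a i / w i) := by
    rw [min_self]
    exact mul_nonneg (mul_self_nonneg _) (div_nonneg (ha i) (hw i).le)
  have hcross := two_mul_sum_sum_mul_mul_min_le A B hdisj w (fun i => v i / w i)
    (fun i => μ i / w i) (fun i _ => div_nonneg (hv i) (hw i).le)
    (fun i _ => div_nonneg (hμ i) (hw i).le)
  have hA := sum_sum_le_two_mul_sum_sum_filter_le A _ (hsymm v) (hdiag v hv)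
  have hB := sum_sum_le_two_mul_sum_sum_filter_le B _ (hsymm μ) (hdiag μ hμ)
  linarith

/-- Recombinant property (P2) with `ρ = 2` for weighted completion time:
the optimal completion time over all jobs (probed jobs `A` with realized sizes `v`,
unprobed jobs `B = Ā` with expected sizes `μ`) is at most twice the sum of the
optima on each part alone. -/
theorem completion_time_recombinant {n : ℕ} (w v μ : Fin n → ℝ)
    (hw : ∀ i, 0 < w i) (hv : ∀ i, 0 ≤ v i) (hμ : ∀ i, 0 ≤ μ i)
    (A B : Finset (Fin n)) (hdisj : Disjoint A B) (hcover : A ∪ B = Finset.univ) :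
    (∑ i ∈ A, ∑ j ∈ A.filter (fun j => i ≤ j), min (w j * v i) (w i * v j)) +
    (∑ i ∈ B, ∑ j ∈ B.filter (fun j => i ≤ j), min (w j * μ i) (w i * μ j)) +
    (∑ i ∈ A, ∑ j ∈ B, min (w j * v i) (w i * μ j)) ≤
    2 * ((∑ i ∈ A, ∑ j ∈ A.filter (fun j => i ≤ j), min (w j * v i) (w i * v j)) +
         (∑ i ∈ B, ∑ j ∈ B.filter (fun j => i ≤ j), min (w j * μ i) (w i * μ j))) :=
  completion_time_recombinant_general w v μ hw hv hμ A B hdisj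
end

section
/- Smith's rule optimality: for $n$ jobs with weights $w_i>0$ and lengths $l_i>0$, an ordering $\sigma$ of the jobs minimizes the weighted completion time $\sum_i w_{\sigma(i)} \sum_{k\le i} l_{\sigma(k)}$ if it sorts jobs in nonincreasing order of $w_i/l_i$, and the optimal value equals $\sum_{i\le j} \min(w_i l_j, w_j l_i)$. -/
/-!
Job `a` delays job `b` by `l a` exactly when it runs before `b`, so the weighted completion
time splits over pairs `a ≤ b` of jobs: a pair contributes `w b * l a` if `a` runs first and
`w a * l b` otherwise (the diagonal contributes `w a * l a`). Every such term is at least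
`min (w a * l b) (w b * l a)`, and a schedule sorted by `w / l` attains the minimum in every
pair at once.
-/

/-- Weighted completion time of the ordering `τ` (job in position `i` is `τ i`):
each job's completion time is the sum of lengths of the jobs at positions `≤ i`. -/
noncomputable def weightedCompletionTime {n : ℕ} (w l : Fin n → ℝ) (τ : Equiv.Perm (Fin n)) : ℝ :=
  ∑ i : Fin n, w (τ i) * ∑ k ∈ Finset.univ.filter (fun k => k ≤ i), l (τ k)

open Finset

theorem Finset.sum_sum_eq_sum_sum_le_add_swap {α M : Type*} [Fintype α] [LinearOrder α]
    [AddCommMonoid M] (f : α → α → M) :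
    ∑ a, ∑ b, f a b = ∑ a, ∑ b ∈ univ.filter (a ≤ ·), if a = b then f a b else f a b + f b a := by
  have hlt : ∑ a, ∑ b ∈ univ.filter (· < a), f a b = ∑ a, ∑ b ∈ univ.filter (a < ·), f b a :=
    sum_comm' (by simp)
  calc ∑ a, ∑ b, f a b
      = ∑ a, (∑ b ∈ univ.filter (a ≤ ·), f a b + ∑ b ∈ univ.filter (· < a), f a b) := by
        refine sum_congr rfl fun a _ => ?_
        simp only [← not_le]
        exact (sum_filter_add_sum_filter_not _ _ _).symm
    _ = ∑ a, (∑ b ∈ univ.filter (a ≤ ·), f a b + ∑ b ∈ univ.filter (a < ·), f b a) := by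
        rw [sum_add_distrib, sum_add_distrib, hlt]
    _ = _ := by
        refine sum_congr rfl fun a _ => ?_
        simp only [sum_filter, ← sum_add_distrib]
        refine sum_congr rfl fun b _ => ?_
        rcases lt_trichotomy a b with h | rfl | h
        · simp [h.le, h, h.ne]
        · simp
        · simp [h.not_ge, h.not_gt]

section
variable {n : ℕ} (w l : Fin n → ℝ)

theorem weightedCompletionTime_eq_sum_sum_precedes (τ : Equiv.Perm (Fin n)) :
    weightedCompletionTime w l τ =
      ∑ a, ∑ b, if τ.symm a ≤ τ.symm b then w b * l a else 0 := by
  calc weightedCompletionTime w l τ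
      = ∑ k, ∑ i, if k ≤ i then w (τ i) * l (τ k) else 0 := by
        simp only [weightedCompletionTime, mul_sum, sum_filter, mul_ite, mul_zero]
        exact sum_comm
    _ = _ := by
        rw [← τ.symm.sum_comp]
        refine sum_congr rfl fun a _ => ?_
        rw [← τ.symm.sum_comp]
        simp

def pairDelay (τ : Equiv.Perm (Fin n)) (a b : Fin n) : ℝ :=
  if τ.symm a ≤ τ.symm b then w b * l a else w a * l b

theorem weightedCompletionTime_eq_sum_pairDelay (τ : Equiv.Perm (Fin n)) :
    weightedCompletionTime w l τ = ∑ a, ∑ b ∈ univ.filter (a ≤ ·), pairDelay w l τ a b := by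
  rw [weightedCompletionTime_eq_sum_sum_precedes, sum_sum_eq_sum_sum_le_add_swap]
  refine sum_congr rfl fun a _ => sum_congr rfl fun b _ => ?_
  rcases eq_or_ne a b with rfl | hab
  · simp [pairDelay]
  · have hτ : τ.symm a ≠ τ.symm b := τ.symm.injective.ne hab
    rcases hτ.lt_or_gt with h | h <;> simp [pairDelay, h.le, h.not_ge, hab]

theorem min_le_pairDelay (τ : Equiv.Perm (Fin n)) (a b : Fin n) :
    min (w a * l b) (w b * l a) ≤ pairDelay w l τ a b := by
  unfold pairDelay
  split_ifs
  · exact min_le_right _ _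
  · exact min_le_left _ _

theorem pairDelay_eq_min_of_sorted {σ : Equiv.Perm (Fin n)}
    (hsorted : ∀ i j : Fin n, i ≤ j → w (σ j) * l (σ i) ≤ w (σ i) * l (σ j)) (a b : Fin n) :
    pairDelay w l σ a b = min (w a * l b) (w b * l a) := by
  unfold pairDelay
  split_ifs with h
  · simpa using (min_eq_right (hsorted _ _ h)).symm
  · simpa using (min_eq_left (hsorted _ _ (not_le.mp h).le)).symm

end

theorem smiths_rule_optimal_general {n : ℕ} (w l : Fin n → ℝ)
    (σ : Equiv.Perm (Fin n))
    (hsorted : ∀ i j : Fin n, i ≤ j → w (σ j) * l (σ i) ≤ w (σ i) * l (σ j)) :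
    (∀ τ : Equiv.Perm (Fin n),
      weightedCompletionTime w l σ ≤ weightedCompletionTime w l τ) ∧
    weightedCompletionTime w l σ =
      ∑ i : Fin n, ∑ j ∈ Finset.univ.filter (fun j => i ≤ j), min (w i * l j) (w j * l i) := by
  have hσ : weightedCompletionTime w l σ =
      ∑ i : Fin n, ∑ j ∈ Finset.univ.filter (fun j => i ≤ j), min (w i * l j) (w j * l i) := by
    rw [weightedCompletionTime_eq_sum_pairDelay]
    exact sum_congr rfl fun a _ => sum_congr rfl fun b _ =>
      pairDelay_eq_min_of_sorted w l hsorted a b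
  refine ⟨fun τ => ?_, hσ⟩
  rw [hσ, weightedCompletionTime_eq_sum_pairDelay]
  exact sum_le_sum fun a _ => sum_le_sum fun b _ => min_le_pairDelay w l τ a b

/-- Smith's rule: an ordering sorting jobs in nonincreasing order of `w i / l i`
minimizes the weighted completion time, and the optimal value equals
`∑_{i ≤ j} min (w i * l j) (w j * l i)`. -/
theorem smiths_rule_optimal {n : ℕ} (w l : Fin n → ℝ)
    (hw : ∀ i, 0 < w i) (hl : ∀ i, 0 < l i)
    (σ : Equiv.Perm (Fin n))
    (hsorted : ∀ i j : Fin n, i ≤ j → w (σ j) * l (σ i) ≤ w (σ i) * l (σ j)) :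
    (∀ τ : Equiv.Perm (Fin n),
      weightedCompletionTime w l σ ≤ weightedCompletionTime w l τ) ∧
    weightedCompletionTime w l σ =
      ∑ i : Fin n, ∑ j ∈ Finset.univ.filter (fun j => i ≤ j), min (w i * l j) (w j * l i) :=
  smiths_rule_optimal_general w l σ hsorted
end

section
/- LP rounding for the completion-time outlier problem: let $(z, e)$ be a feasible fractional solution with $z_i \ge 0$, $e_{ij} \ge 0$, satisfying $e_{ij} + z_i + z_j \ge 1$ for all $i < j$ and $\sum_i z_i c_i \le C$. Define $S = \{i : z_i \ge 1/3\}$, $\tilde z_i = 1$ if $i \in S$ else $0$, and $\tilde e_{ij} = 1$ if $i \notin S$ and $j \notin S$, else $0$. Then $\tilde z_i \le 3 z_i$ for all $i$, $\tilde e_{ij} \le 3 e_{ij}$ for all $i<j$, and hence $\sum_{i\in S} c_i \le 3C$ and the rounded objective $\sum_{i<j} \tilde e_{ij} m_{ij} + \sum_i (1-\tilde z_i) a_i$ is at most $3$ times the fractional objective $\sum_{i<j} e_{ij} m_{ij} + \sum_i (1-z_i) a_i$, for any nonnegative coefficients $m_{ij}, a_i$. -/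
/-! Round every `z i ≥ 1/3` up to `1` and everything else down to `0`. A rounded-up variable had
`z i ≥ 1/3`, so it grows at most threefold; a pair that both round down has `z i + z j < 2/3`,
so the covering constraint forces `e i j > 1/3`; and a variable rounded down had `1 - z i > 2/3`.
Each rounded quantity is therefore at most three times its fractional value, and multiplying by
the nonnegative coefficients and summing gives the budget and objective bounds. -/

open Finset

lemma ite_le_three_mul {x : ℝ} (hx : 0 ≤ x) :
    (if 1 / 3 ≤ x then 1 else 0 : ℝ) ≤ 3 * x := by
  split_ifs with h <;> linarith

lemma one_sub_ite_le_three_mul_one_sub {x : ℝ} (hx : x ≤ 1) :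
    1 - (if 1 / 3 ≤ x then 1 else 0 : ℝ) ≤ 3 * (1 - x) := by
  split_ifs with h <;> linarith

lemma ite_lt_and_lt_le_three_mul {x y f : ℝ} (hf : 0 ≤ f) (hcover : 1 ≤ f + x + y) :
    (if x < 1 / 3 ∧ y < 1 / 3 then 1 else 0 : ℝ) ≤ 3 * f := by
  split_ifs with h
  · linarith [h.1, h.2]
  · linarith

lemma sum_mul_le_mul_sum_mul {ι : Type*} (s : Finset ι) {f g w : ι → ℝ} (k : ℝ)
    (hfg : ∀ i ∈ s, f i ≤ k * g i) (hw : ∀ i ∈ s, 0 ≤ w i) :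
    ∑ i ∈ s, f i * w i ≤ k * ∑ i ∈ s, g i * w i := by
  rw [mul_sum]
  exact sum_le_sum fun i hi => (mul_le_mul_of_nonneg_right (hfg i hi) (hw i hi)).trans_eq
    (mul_assoc _ _ _)

theorem outlier_lp_rounding_general {n : ℕ} (z : Fin n → ℝ) (e : Fin n → Fin n → ℝ)
    (c : Fin n → ℝ) (m : Fin n → Fin n → ℝ) (a : Fin n → ℝ) (C : ℝ)
    (hz : ∀ i, 0 ≤ z i) (hz1 : ∀ i, z i ≤ 1) (he : ∀ i j, 0 ≤ e i j)
    (hc : ∀ i, 0 ≤ c i) (hm : ∀ i j, 0 ≤ m i j) (ha : ∀ i, 0 ≤ a i)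
    (hcover : ∀ i j : Fin n, i < j → 1 ≤ e i j + z i + z j)
    (hbudget : ∑ i, z i * c i ≤ C)
    (S : Finset (Fin n)) (hS : S = Finset.univ.filter (fun i => 1/3 ≤ z i))
    (tz : Fin n → ℝ) (htz : ∀ i, tz i = if i ∈ S then 1 else 0)
    (te : Fin n → Fin n → ℝ)
    (hte : ∀ i j, te i j = if i ∉ S ∧ j ∉ S then 1 else 0) :
    (∀ i, tz i ≤ 3 * z i) ∧
    (∀ i j : Fin n, i < j → te i j ≤ 3 * e i j) ∧
    (∑ i ∈ S, c i ≤ 3 * C) ∧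
    ((∑ i, ∑ j ∈ Finset.univ.filter (fun j => i < j), te i j * m i j) +
       ∑ i, (1 - tz i) * a i ≤
     3 * ((∑ i, ∑ j ∈ Finset.univ.filter (fun j => i < j), e i j * m i j) +
       ∑ i, (1 - z i) * a i)) := by
  subst hS
  simp only [mem_filter, mem_univ, true_and, not_le] at htz hte
  have htz_le : ∀ i, tz i ≤ 3 * z i := fun i => htz i ▸ ite_le_three_mul (hz i)
  have hte_le : ∀ i j, i < j → te i j ≤ 3 * e i j := fun i j hij =>
    hte i j ▸ ite_lt_and_lt_le_three_mul (he i j) (hcover i j hij)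
  refine ⟨htz_le, hte_le, ?_, ?_⟩
  · calc ∑ i ∈ univ.filter (fun i => 1 / 3 ≤ z i), c i = ∑ i, tz i * c i := by
          simp only [sum_filter, htz, boole_mul]
      _ ≤ 3 * ∑ i, z i * c i :=
          sum_mul_le_mul_sum_mul _ 3 (fun i _ => htz_le i) (fun i _ => hc i)
      _ ≤ 3 * C := by linarith
  · rw [mul_add]
    refine add_le_add ?_ (sum_mul_le_mul_sum_mul _ 3
      (fun i _ => htz i ▸ one_sub_ite_le_three_mul_one_sub (hz1 i)) (fun i _ => ha i))
    rw [mul_sum]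
    exact sum_le_sum fun i _ => sum_mul_le_mul_sum_mul _ 3
      (fun j hj => hte_le i j (mem_filter.mp hj).2) (fun j _ => hm i j)

/-- LP rounding for the completion-time outlier problem: rounding a feasible
fractional solution `(z, e)` at threshold `1/3` gives an integral solution whose
outlier cost is at most `3C` and whose objective is at most `3` times the
fractional objective, for any nonnegative coefficients `m, a`. -/
theorem outlier_lp_rounding {n : ℕ} (z : Fin n → ℝ) (e : Fin n → Fin n → ℝ)
    (c : Fin n → ℝ) (m : Fin n → Fin n → ℝ) (a : Fin n → ℝ) (C : ℝ)
    (hz : ∀ i, 0 ≤ z i) (hz1 : ∀ i, z i ≤ 1) (he : ∀ i j, 0 ≤ e i j)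
    (hc : ∀ i, 0 ≤ c i) (hm : ∀ i j, 0 ≤ m i j) (ha : ∀ i, 0 ≤ a i)
    (hC : 0 < C)
    (hcover : ∀ i j : Fin n, i < j → 1 ≤ e i j + z i + z j)
    (hbudget : ∑ i, z i * c i ≤ C)
    (S : Finset (Fin n)) (hS : S = Finset.univ.filter (fun i => 1/3 ≤ z i))
    (tz : Fin n → ℝ) (htz : ∀ i, tz i = if i ∈ S then 1 else 0)
    (te : Fin n → Fin n → ℝ)
    (hte : ∀ i j, te i j = if i ∉ S ∧ j ∉ S then 1 else 0) :
    (∀ i, tz i ≤ 3 * z i) ∧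
    (∀ i j : Fin n, i < j → te i j ≤ 3 * e i j) ∧
    (∑ i ∈ S, c i ≤ 3 * C) ∧
    ((∑ i, ∑ j ∈ Finset.univ.filter (fun j => i < j), te i j * m i j) +
       ∑ i, (1 - tz i) * a i ≤
     3 * ((∑ i, ∑ j ∈ Finset.univ.filter (fun j => i < j), e i j * m i j) +
       ∑ i, (1 - z i) * a i)) :=
  outlier_lp_rounding_general z e c m a C hz hz1 he hc hm ha hcover hbudget S hS tz htz te hte
end

section
/- Probing benefit gap: for the instance of $n$ unit-weight jobs with i.i.d. Bernoulli$(1/n)$ sizes, the ratio of the expected completion time without probing, $(n+1)/2$, to the expected completion time after probing all jobs and sorting size-0 jobs first, at most $3/2$, is at least $(n+1)/3 = \Omega(n)$. -/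
open Finset

noncomputable def bernoulliProb (n : ℕ) (ω : Fin n → Bool) : ℝ :=
  ∏ i : Fin n, if ω i then (1 : ℝ) / n else 1 - 1 / n

lemma fact_sum_prod {n : ℕ} (g : Fin n → Bool → ℝ) :
    ∑ ω : Fin n → Bool, ∏ i, g i (ω i) = ∏ i, (g i true + g i false) := by
  have := Finset.prod_univ_sum (fun _ : Fin n => (Finset.univ : Finset Bool)) g
  rw [Fintype.piFinset_univ] at this
  rw [← this]
  exact Finset.prod_congr rfl fun i _ => by simp [Fintype.sum_bool]

lemma moment1 {n : ℕ} (i : Fin n) :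
    ∑ ω : Fin n → Bool, bernoulliProb n ω * (if ω i then (1:ℝ) else 0) = 1 / n := by
  have h : ∀ ω : Fin n → Bool, bernoulliProb n ω * (if ω i then (1:ℝ) else 0)
      = ∏ j, ((if ω j then (1:ℝ)/n else 1 - 1/n) * (if j = i then (if ω j then (1:ℝ) else 0) else 1)) := by
    intro ω
    rw [Finset.prod_mul_distrib, Finset.prod_ite_eq' Finset.univ i]
    simp [bernoulliProb]
  simp only [h]
  rw [fact_sum_prod (fun j b => (if b then (1:ℝ)/n else 1 - 1/n) * (if j = i then (if b then (1:ℝ) else 0) else 1))]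
  have : ∀ j : Fin n, ((if true then (1:ℝ)/n else 1 - 1/n) * (if j = i then (if true then (1:ℝ) else 0) else 1)
      + (if false then (1:ℝ)/n else 1 - 1/n) * (if j = i then (if false then (1:ℝ) else 0) else 1))
      = if j = i then (1:ℝ)/n else 1 := by
    intro j; by_cases hj : j = i <;> simp [hj]
  rw [Finset.prod_congr rfl fun j _ => this j, Finset.prod_ite_eq' Finset.univ i]
  simp

lemma moment2 {n : ℕ} (i j : Fin n) :
    ∑ ω : Fin n → Bool, bernoulliProb n ω * (if ω i then (1:ℝ) else 0) * (if ω j then (1:ℝ) else 0)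
      = if i = j then (1:ℝ) / n else 1 / n ^ 2 := by
  have h : ∀ ω : Fin n → Bool, bernoulliProb n ω * (if ω i then (1:ℝ) else 0) * (if ω j then (1:ℝ) else 0)
      = ∏ k, ((if ω k then (1:ℝ)/n else 1 - 1/n) * (if k = i then (if ω k then (1:ℝ) else 0) else 1)
          * (if k = j then (if ω k then (1:ℝ) else 0) else 1)) := by
    intro ω
    rw [Finset.prod_mul_distrib, Finset.prod_mul_distrib,
      Finset.prod_ite_eq' Finset.univ i, Finset.prod_ite_eq' Finset.univ j]
    simp [bernoulliProb]
  simp only [h]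
  rw [fact_sum_prod (fun k b => (if b then (1:ℝ)/n else 1 - 1/n) * (if k = i then (if b then (1:ℝ) else 0) else 1) * (if k = j then (if b then (1:ℝ) else 0) else 1))]
  have key : ∀ k : Fin n,
      ((if true then (1:ℝ)/n else 1 - 1/n) * (if k = i then (if true then (1:ℝ) else 0) else 1)
          * (if k = j then (if true then (1:ℝ) else 0) else 1)
       + (if false then (1:ℝ)/n else 1 - 1/n) * (if k = i then (if false then (1:ℝ) else 0) else 1)
          * (if k = j then (if false then (1:ℝ) else 0) else 1))
      = if k = i then (1:ℝ)/n else if k = j then (1:ℝ)/n else 1 := by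
    intro k; by_cases h1 : k = i <;> by_cases h2 : k = j <;> simp [h1, h2]
  rw [Finset.prod_congr rfl fun k _ => key k]
  by_cases hij : i = j
  · subst hij
    rw [show (fun k => if k = i then (1:ℝ)/n else if k = i then (1:ℝ)/n else 1)
        = fun k => if k = i then (1:ℝ)/n else 1 from funext fun k => by by_cases h : k = i <;> simp [h]]
    rw [Finset.prod_ite_eq' Finset.univ i]
    simp
  · rw [show (fun k => if k = i then (1:ℝ)/n else if k = j then (1:ℝ)/n else 1)
        = fun k => (if k = i then (1:ℝ)/n else 1) * (if k = j then (1:ℝ)/n else 1) from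
        funext fun k => by
          by_cases h1 : k = i <;> by_cases h2 : k = j <;>
            first | (exfalso; exact hij (h1 ▸ h2 ▸ rfl)) | simp [h1, h2, hij, (Ne.symm hij : j ≠ i)]]
    rw [Finset.prod_mul_distrib, Finset.prod_ite_eq' Finset.univ i, Finset.prod_ite_eq' Finset.univ j]
    simp [hij]
    ring

lemma card_eq_sum {n : ℕ} (ω : Fin n → Bool) :
    ((Finset.univ.filter (fun i => ω i = true)).card : ℝ) = ∑ i, if ω i then (1:ℝ) else 0 := by
  rw [Finset.sum_boole]

/-- Probing benefit gap: for `n` unit-weight jobs with i.i.d. Bernoulli(1/n)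
sizes, the ratio of the expected completion time `(n+1)/2` without probing to
the expected completion time after probing all jobs and scheduling the size-0
jobs first (namely `E[k(k+1)/2]` with `k ~ Binomial(n,1/n)`) is at least
`(n+1)/3 = Ω(n)`. -/
theorem probing_benefit_gap (n : ℕ) (hn : 1 ≤ n) :
    (((n : ℝ) + 1) / 2) /
      (∑ ω : Fin n → Bool, bernoulliProb n ω *
        (((Finset.univ.filter (fun i => ω i = true)).card : ℝ) *
         ((Finset.univ.filter (fun i => ω i = true)).card + 1) / 2)) ≥
    ((n : ℝ) + 1) / 3 := by
  have hn1 : (1:ℝ) ≤ (n:ℝ) := by exact_mod_cast hn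
  have hne : (n:ℝ) ≠ 0 := by positivity
  have hsum1 : ∑ ω : Fin n → Bool, bernoulliProb n ω *
      ((Finset.univ.filter (fun i => ω i = true)).card : ℝ) = 1 := by
    have : ∀ ω : Fin n → Bool, bernoulliProb n ω *
        ((Finset.univ.filter (fun i => ω i = true)).card : ℝ)
        = ∑ i, bernoulliProb n ω * (if ω i then (1:ℝ) else 0) := by
      intro ω; rw [card_eq_sum, Finset.mul_sum]
    simp only [this]
    rw [Finset.sum_comm]
    simp only [moment1]
    rw [Finset.sum_const, Finset.card_univ, Fintype.card_fin, nsmul_eq_mul]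
    field_simp
  have hsum2 : ∑ ω : Fin n → Bool, bernoulliProb n ω *
      ((Finset.univ.filter (fun i => ω i = true)).card : ℝ) *
      ((Finset.univ.filter (fun i => ω i = true)).card : ℝ) = 2 - 1/n := by
    have : ∀ ω : Fin n → Bool, bernoulliProb n ω *
        ((Finset.univ.filter (fun i => ω i = true)).card : ℝ) *
        ((Finset.univ.filter (fun i => ω i = true)).card : ℝ)
        = ∑ i, ∑ j, bernoulliProb n ω * (if ω i then (1:ℝ) else 0) * (if ω j then (1:ℝ) else 0) := by
      intro ω
      simp only [card_eq_sum]
      rw [mul_assoc, Finset.sum_mul_sum, Finset.mul_sum]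
      exact Finset.sum_congr rfl fun i _ => by
        rw [Finset.mul_sum]; exact Finset.sum_congr rfl fun j _ => by ring
    simp only [this]
    rw [Finset.sum_comm]
    have swap2 : ∀ i : Fin n, ∑ ω : Fin n → Bool, ∑ j,
        bernoulliProb n ω * (if ω i then (1:ℝ) else 0) * (if ω j then (1:ℝ) else 0)
        = ∑ j : Fin n, (if i = j then (1:ℝ)/n else 1/n^2) := by
      intro i
      rw [Finset.sum_comm]
      exact Finset.sum_congr rfl fun j _ => moment2 i j
    simp only [swap2]
    have inner : ∀ i : Fin n, ∑ j : Fin n, (if i = j then (1:ℝ)/n else 1/n^2)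
        = 1/n + (n-1) * (1/n^2) := by
      intro i
      have : ∀ j : Fin n, (if i = j then (1:ℝ)/n else 1/n^2)
          = 1/n^2 + (if i = j then (1:ℝ)/n - 1/n^2 else 0) := by
        intro j; by_cases h : i = j <;> simp [h]
      simp only [this]
      rw [Finset.sum_add_distrib, Finset.sum_ite_eq, Finset.sum_const, Finset.card_univ,
        Fintype.card_fin, nsmul_eq_mul]
      simp
      ring
    simp only [inner]
    rw [Finset.sum_const, Finset.card_univ, Fintype.card_fin, nsmul_eq_mul]
    field_simp
    ring
  have hD : ∑ ω : Fin n → Bool, bernoulliProb n ω *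
      (((Finset.univ.filter (fun i => ω i = true)).card : ℝ) *
       ((Finset.univ.filter (fun i => ω i = true)).card + 1) / 2) = (3 - 1/n)/2 := by
    have : ∀ ω : Fin n → Bool, bernoulliProb n ω *
        (((Finset.univ.filter (fun i => ω i = true)).card : ℝ) *
         ((Finset.univ.filter (fun i => ω i = true)).card + 1) / 2)
        = (bernoulliProb n ω * ((Finset.univ.filter (fun i => ω i = true)).card : ℝ) *
            ((Finset.univ.filter (fun i => ω i = true)).card : ℝ)
          + bernoulliProb n ω * ((Finset.univ.filter (fun i => ω i = true)).card : ℝ)) / 2 := by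
      intro ω; ring
    simp only [this]
    rw [← Finset.sum_div, Finset.sum_add_distrib, hsum1, hsum2]
    ring
  rw [hD]
  have h3 : (0:ℝ) < 3 - 1/n := by
    have : 1/(n:ℝ) ≤ 1 := by
      rw [div_le_one (by linarith)]; exact hn1
    linarith
  have heq : ((n:ℝ)+1)/2 / ((3 - 1/n)/2) = (n:ℝ)*((n:ℝ)+1)/(3*n-1) := by
    have h31 : 3*(n:ℝ) - 1 ≠ 0 := by nlinarith
    field_simp
  rw [ge_iff_le, heq, div_le_div_iff₀ (by norm_num) (by nlinarith)]
  nlinarith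
end

section
/- Framework approximation theorem: suppose a minimization problem satisfies (i) a recombinant inequality with constant $\rho$: for all partitions $(S, \bar S)$ and realizations, $Q_1 \le \rho(Q_A + Q_{\bar S} + Q_{opt})$ where $Q_1$ is the combined optimum, $Q_A$ the optimum on probed values, $Q_{\bar S}$ the unprobed optimum, and $Q_{opt}$ the clairvoyant optimum; (ii) a $\gamma_1$-approximate outlier solution $S$ with $\min_{o} \mathbb{E}[h_{\bar S}] \le \gamma_1 \mathcal{G}^*(C)$; (iii) a $\gamma_2$-approximation for the posterior optimization; (iv) downward closure implying $\mathbb{E}[Q_A], \mathbb{E}[Q_{opt}] \le OPT_h$ and $\mathcal{G}^*(C) \le OPT_h$. Then the non-adaptive strategy that probes $S$ and applies the $\gamma_2$-approximation achieves expected value at most $\rho\gamma_2(\gamma_1 + 2)\, OPT_h$. -/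
/-- Framework approximation theorem (abstract form): on a finite probability
space `Ω` of probe outcomes, let `ALG` be the value of the non-adaptive
strategy, `Q1` the combined optimum given the probed values, `QA` the optimum on
the probed values, `QS` the (constant) unprobed optimum on `S̄`, `Qopt` the
clairvoyant optimum, `G = 𝒢*(C)` the outlier bound, and `OPTh` the optimal
adaptive value with hard budget. If (i) the recombinant inequality with constant
`ρ` holds, (ii) the outlier solution is `γ₁`-approximate, (iii) the posterior
optimization is `γ₂`-approximate, and (iv) downward closure bounds
`E[QA], E[Qopt], G ≤ OPTh`, then `E[ALG] ≤ γ₂ ρ (γ₁ + 2) OPTh`. -/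
theorem framework_approximation {Ω : Type*} [Fintype Ω]
    (pr : Ω → ℝ) (hpr : ∀ ω, 0 ≤ pr ω) (hsum : ∑ ω, pr ω = 1)
    (ALG Q1 QA Qopt : Ω → ℝ) (QS G OPTh : ℝ)
    (ρ γ₁ γ₂ : ℝ) (hρ : 1 ≤ ρ) (hγ₁ : 1 ≤ γ₁) (hγ₂ : 1 ≤ γ₂)
    (hOPT : 0 ≤ OPTh)
    (hposterior : ∀ ω, ALG ω ≤ γ₂ * Q1 ω)
    (hrecombinant : ∀ ω, Q1 ω ≤ ρ * (QA ω + QS + Qopt ω))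
    (houtlier : QS ≤ γ₁ * G)
    (hQA : ∑ ω, pr ω * QA ω ≤ OPTh)
    (hQopt : ∑ ω, pr ω * Qopt ω ≤ OPTh)
    (hG : G ≤ OPTh) :
    ∑ ω, pr ω * ALG ω ≤ γ₂ * ρ * (γ₁ + 2) * OPTh := by
  have hρ0 : (0:ℝ) ≤ ρ := le_trans zero_le_one hρ
  have hγ₂0 : (0:ℝ) ≤ γ₂ := le_trans zero_le_one hγ₂
  have h1 : ∑ ω, pr ω * ALG ω ≤ ∑ ω, pr ω * (γ₂ * ρ * (QA ω + QS + Qopt ω)) := by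
    apply Finset.sum_le_sum
    intro ω _
    apply mul_le_mul_of_nonneg_left _ (hpr ω)
    calc ALG ω ≤ γ₂ * Q1 ω := hposterior ω
      _ ≤ γ₂ * (ρ * (QA ω + QS + Qopt ω)) :=
        mul_le_mul_of_nonneg_left (hrecombinant ω) hγ₂0
      _ = γ₂ * ρ * (QA ω + QS + Qopt ω) := by ring
  have h2 : ∑ ω, pr ω * (γ₂ * ρ * (QA ω + QS + Qopt ω))
      = γ₂ * ρ * ((∑ ω, pr ω * QA ω) + QS + (∑ ω, pr ω * Qopt ω)) := by
    have he : ∀ ω, pr ω * (γ₂ * ρ * (QA ω + QS + Qopt ω))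
        = γ₂ * ρ * (pr ω * QA ω) + γ₂ * ρ * QS * pr ω + γ₂ * ρ * (pr ω * Qopt ω) := by
      intro ω; ring
    simp_rw [he, Finset.sum_add_distrib, ← Finset.mul_sum, hsum]
    ring
  have hQS : QS ≤ γ₁ * OPTh := le_trans houtlier
    (mul_le_mul_of_nonneg_left hG (le_trans zero_le_one hγ₁))
  calc ∑ ω, pr ω * ALG ω ≤ γ₂ * ρ * ((∑ ω, pr ω * QA ω) + QS + (∑ ω, pr ω * Qopt ω)) := by
        rw [← h2]; exact h1
    _ ≤ γ₂ * ρ * (OPTh + γ₁ * OPTh + OPTh) := by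
        apply mul_le_mul_of_nonneg_left _ (mul_nonneg hγ₂0 hρ0)
        gcongr
    _ = γ₂ * ρ * (γ₁ + 2) * OPTh := by ring
end
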